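/- arXiv:2403.02478 — 2 statements merged into one kernel-verified Lean document; each statement's English description precedes it below -/
import Mathlib

section
/- Every 3×3 Permutation-Like Matrix A over a field of characteristic zero is either periodic (there exists k ≥ 1 with A^{k+1} = A) or satisfies that A² is a row PLM R_m^{(3)} for some 1 ≤ m ≤ 3. -/
def IsPLM {k : Type*} [Field k] {d : ℕ} (A : Matrix (Fin d) (Fin d) k) : Prop :=
  (∀ i j, A i j = 0 ∨ A i j = 1) ∧ ∀ j, ∃! i, A i j = 1

def rowPLM {k : Type*} [Field k] (d : ℕ) (m : Fin d) : Matrix (Fin d) (Fin d) k :=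
  fun i _ => if i = m then 1 else 0

def funM {k : Type*} [Field k] {d : ℕ} (f : Fin d → Fin d) : Matrix (Fin d) (Fin d) k :=
  fun i j => if i = f j then 1 else 0

lemma funM_mul {k : Type*} [Field k] {d : ℕ} (f g : Fin d → Fin d) :
    (funM f : Matrix (Fin d) (Fin d) k) * funM g = funM (f ∘ g) := by
  ext i j
  simp only [Matrix.mul_apply, funM, Function.comp]
  rw [Finset.sum_eq_single (g j)]
  · simp
  · intro b _ hb; simp [hb]
  · simp

lemma funM_pow {k : Type*} [Field k] {d : ℕ} (f : Fin d → Fin d) (n : ℕ) :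
    (funM f : Matrix (Fin d) (Fin d) k) ^ (n + 1) = funM (f^[n + 1]) := by
  induction n with
  | zero => simp
  | succ n ih =>
    rw [pow_succ, ih, funM_mul, ← Function.iterate_succ]

lemma fun3_dichotomy (f : Fin 3 → Fin 3) :
    (∃ n : Fin 7, 1 ≤ n.val ∧ f^[n.val + 1] = f) ∨ (∃ m : Fin 3, ∀ j, f (f j) = m) := by
  revert f; decide

theorem plm_three_periodic_or_sq_row {k : Type*} [Field k] [CharZero k]
    (A : Matrix (Fin 3) (Fin 3) k) (hA : IsPLM A) :
    (∃ n ≥ 1, A ^ (n + 1) = A) ∨ (∃ m : Fin 3, A ^ 2 = rowPLM 3 m) := by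
  obtain ⟨h01, huniq⟩ := hA
  set f : Fin 3 → Fin 3 := fun j => (huniq j).choose with hf
  have hAf : A = funM f := by
    ext i j
    simp only [funM]
    by_cases h : i = f j
    · subst h
      simp only [hf]
      exact (huniq j).choose_spec.1
    · simp only [h, if_neg h]
      rcases h01 i j with h0 | h1
      · exact h0
      · exact absurd ((huniq j).choose_spec.2 i h1) h
  rcases fun3_dichotomy f with ⟨n, hn1, hn⟩ | ⟨m, hm⟩
  · left
    refine ⟨n.val, hn1, ?_⟩
    rw [hAf, funM_pow, hn]
  · right
    refine ⟨m, ?_⟩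
    rw [hAf]
    have : (funM f : Matrix (Fin 3) (Fin 3) k) ^ 2 = funM (f^[2]) := funM_pow f 1
    rw [this]
    ext i j
    simp [funM, rowPLM, Function.iterate_succ, hm j]
end

section
/- If A is a pre-row Permutation-Like Matrix that is not itself a row PLM, then A is not periodic: there is no m ≥ 1 such that A^{m+1} = A. -/
lemma IsPLM.one {k : Type*} [Field k] {d : ℕ} : IsPLM (1 : Matrix (Fin d) (Fin d) k) := by
  constructor
  · intro i j
    by_cases h : i = j
    · right; simp [Matrix.one_apply, h]
    · left; simp [Matrix.one_apply, h]
  · intro j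
    refine ⟨j, by simp [Matrix.one_apply], ?_⟩
    intro i hi
    by_contra h
    simp [Matrix.one_apply, h] at hi

lemma IsPLM.col_sum {k : Type*} [Field k] {d : ℕ} {B : Matrix (Fin d) (Fin d) k}
    (hB : IsPLM B) (j : Fin d) : ∑ i, B i j = 1 := by
  obtain ⟨i0, hi0, huniq⟩ := hB.2 j
  rw [Finset.sum_eq_single i0]
  · exact hi0
  · intro i _ hne
    rcases hB.1 i j with h | h
    · exact h
    · exact absurd (huniq i h) hne
  · simp

lemma IsPLM.mul {k : Type*} [Field k] {d : ℕ} {A B : Matrix (Fin d) (Fin d) k}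
    (hA : IsPLM A) (hB : IsPLM B) : IsPLM (A * B) := by
  have key : ∀ j : Fin d, ∃ k0 : Fin d, ∀ i, (A * B) i j = A i k0 := by
    intro j
    obtain ⟨k0, hk0, hu⟩ := hB.2 j
    refine ⟨k0, fun i => ?_⟩
    rw [Matrix.mul_apply, Finset.sum_eq_single k0]
    · rw [hk0, mul_one]
    · intro b _ hne
      rcases hB.1 b j with h | h
      · rw [h, mul_zero]
      · exact absurd (hu b h) hne
    · simp
  constructor
  · intro i j
    obtain ⟨k0, hk0⟩ := key j
    rw [hk0]
    exact hA.1 i k0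
  · intro j
    obtain ⟨k0, hk0⟩ := key j
    obtain ⟨i0, hi0, hu⟩ := hA.2 k0
    exact ⟨i0, (hk0 i0).trans hi0, fun i hi => hu i ((hk0 i).symm.trans hi)⟩

lemma IsPLM.pow {k : Type*} [Field k] {d : ℕ} {A : Matrix (Fin d) (Fin d) k}
    (hA : IsPLM A) : ∀ s : ℕ, IsPLM (A ^ s)
  | 0 => by rw [pow_zero]; exact IsPLM.one
  | (s+1) => by rw [pow_succ]; exact (hA.pow s).mul hA

lemma rowPLM_mul {k : Type*} [Field k] {d : ℕ} (m : Fin d) {B : Matrix (Fin d) (Fin d) k}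
    (hB : IsPLM B) : rowPLM d m * B = rowPLM d m := by
  ext i j
  rw [Matrix.mul_apply]
  by_cases h : i = m
  · simp only [rowPLM, if_pos h, one_mul]
    exact hB.col_sum j
  · simp [rowPLM, h]

/-- A pre-row PLM which is not a row PLM is not periodic. -/
theorem prerow_not_row_not_periodic {k : Type*} [Field k] {d : ℕ}
    (A : Matrix (Fin d) (Fin d) k) (hA : IsPLM A)
    (hpre : ∃ n ≥ 1, ∃ m : Fin d, A ^ (n + 1) = rowPLM d m)
    (hrow : ∀ m : Fin d, A ≠ rowPLM d m) :
    ¬ ∃ n ≥ 1, A ^ (n + 1) = A := by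
  rintro ⟨p, hp, hper⟩
  obtain ⟨n, hn, m0, hn1⟩ := hpre
  -- A = A ^ (1 + t * p) for all t
  have hcyc : ∀ t : ℕ, A ^ (1 + t * p) = A := by
    intro t
    induction t with
    | zero => simp
    | succ t ih =>
      have : 1 + (t + 1) * p = (1 + t * p) + p := by ring
      rw [this, pow_add, ih, ← pow_succ']
      exact hper
  have hge : n + 1 ≤ 1 + (n + 1) * p := by nlinarith
  obtain ⟨s, hs⟩ := Nat.exists_eq_add_of_le hge
  have : A = rowPLM d m0 := by
    calc A = A ^ (1 + (n + 1) * p) := (hcyc (n + 1)).symm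
    _ = A ^ (n + 1) * A ^ s := by rw [hs, pow_add]
    _ = rowPLM d m0 * A ^ s := by rw [hn1]
    _ = rowPLM d m0 := rowPLM_mul m0 (hA.pow s)
  exact hrow m0 this
end
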